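/- arXiv:2504.19350 — 2 statements merged into one kernel-verified Lean document; each statement's English description precedes it below -/
import Mathlib

section
/- Let K be a positive integer and Δ₁, …, Δ_K be nonnegative integers with total sum Σ, and let m₁, …, m_K be positive integers with total sum n. Then ∏_{k=1}^K C(Δ_k + m_k, m_k − 1) ≤ C(Σ + n, n − K). -/
lemma choose_mul_choose_le (a b i j : ℕ) :
    a.choose i * b.choose j ≤ (a + b).choose (i + j) := by
  rw [Nat.add_choose_eq]
  exact Finset.single_le_sum (f := fun p => a.choose p.1 * b.choose p.2)
    (fun p _ => Nat.zero_le _)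
    (Finset.HasAntidiagonal.mem_antidiagonal.mpr (rfl : (i, j).1 + (i, j).2 = i + j))

lemma prod_choose_le {ι : Type*} (s : Finset ι) (f g : ι → ℕ) :
    (∏ i ∈ s, Nat.choose (f i) (g i)) ≤
      Nat.choose (∑ i ∈ s, f i) (∑ i ∈ s, g i) := by
  induction s using Finset.cons_induction with
  | empty => simp
  | cons a s ha ih =>
    rw [Finset.prod_cons, Finset.sum_cons, Finset.sum_cons]
    calc Nat.choose (f a) (g a) * ∏ i ∈ s, Nat.choose (f i) (g i)
        ≤ Nat.choose (f a) (g a) * Nat.choose (∑ i ∈ s, f i) (∑ i ∈ s, g i) :=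
          Nat.mul_le_mul_left _ ih
      _ ≤ _ := choose_mul_choose_le _ _ _ _

/-- Vandermonde-style product inequality, inequality (4) in the paper. -/
theorem stmt_2 (K : ℕ) (hK : 0 < K) (Δ m : Fin K → ℕ) (hm : ∀ k, 0 < m k) :
    (∏ k, Nat.choose (Δ k + m k) (m k - 1)) ≤
      Nat.choose ((∑ k, Δ k) + (∑ k, m k)) ((∑ k, m k) - K) := by
  have h1 : (∑ k, m k) - K = ∑ k, (m k - 1) := by
    have : (∑ k, (m k - 1)) + K = ∑ k, m k := by
      have : (∑ k, (m k - 1)) + (∑ _k : Fin K, 1) = ∑ k, m k := by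
        rw [← Finset.sum_add_distrib]
        exact Finset.sum_congr rfl fun k _ => Nat.sub_add_cancel (hm k)
      simpa using this
    omega
  have h2 : (∑ k, Δ k) + (∑ k, m k) = ∑ k, (Δ k + m k) :=
    (Finset.sum_add_distrib).symm
  rw [h1, h2]
  exact prod_choose_le _ _ _
end

section
/- Let x₁ < ⋯ < x_m be integers, b ≥ 0, and x a target with v := ⌊x/2^b⌋. Suppose [i₁', i₂'] is the maximal interval of indices with ⌊x_i/2^b⌋ prefix structure such that ⌊x_i/2^b⌋ = v for all i ∈ [i₁', i₂']. Then the largest index i with x_i ≤ x lies in [i₁' − 1, i₂'], and equals the largest i ∈ [i₁', i₂'] with (x_i mod 2^b) ≤ (x mod 2^b) if such i exists, and i₁' − 1 otherwise. -/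
theorem low_part_key (a q c : ℕ) (hd : a / c = q / c) :
    (a ≤ q ↔ a % c ≤ q % c) := by
  have h1 := Nat.div_add_mod a c
  have h2 := Nat.div_add_mod q c
  rw [hd] at h1
  set p := c * (q / c) with hp
  omega

/-- Correctness of the low-part step of the rank algorithm: within the maximal
interval where `⌊x_i/2^b⌋ = ⌊q/2^b⌋`, the comparison `x_i ≤ q` reduces to
comparing the low bits, all indices before the interval satisfy `x_i ≤ q`, and
all indices after it satisfy `x_i > q`. -/
theorem stmt_18 (m b : ℕ) (x : ℕ → ℕ) (hmono : StrictMonoOn x (Set.Icc 1 m))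
    (q : ℕ) (i₁' i₂' : ℕ) (h1 : 1 ≤ i₁') (h12 : i₁' ≤ i₂') (h2 : i₂' ≤ m)
    (hin : ∀ i, i₁' ≤ i → i ≤ i₂' → x i / 2 ^ b = q / 2 ^ b)
    (hbefore : ∀ i, 1 ≤ i → i < i₁' → x i / 2 ^ b < q / 2 ^ b)
    (hafter : ∀ i, i₂' < i → i ≤ m → q / 2 ^ b < x i / 2 ^ b) :
    (∀ j, 1 ≤ j → j < i₁' → x j ≤ q) ∧
    (∀ j, i₂' < j → j ≤ m → q < x j) ∧
    (∀ i, i₁' ≤ i → i ≤ i₂' → (x i ≤ q ↔ x i % 2 ^ b ≤ q % 2 ^ b)) := by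
  refine ⟨fun j hj1 hj2 => ?_, fun j hj1 hj2 => ?_, fun i hi1 hi2 => ?_⟩
  · exact le_of_lt (Nat.lt_of_div_lt_div (hbefore j hj1 hj2))
  · exact Nat.lt_of_div_lt_div (hafter j hj1 hj2)
  · exact low_part_key _ _ _ (hin i hi1 hi2)
end
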